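/- Let E ⊆ [0,∞) be strongly porous on the right at 0 with 0 an accumulation point of E. Then the following are equivalent: (i) E is completely strongly porous; (ii) the preordered set (Ĩ_E^d, ⪯) contains a universal element L̃ = {(lₙ,mₙ)} ∈ Ĩ_E^{sd} with limsup_{n→∞} lₙ/mₙ₊₁ < ∞; (iii) E is uniformly strongly porous. -/

import Mathlib

open Filter Set Topology ENNReal

/-- λ(E,0,h): the supremum of lengths of open subintervals of (0,h) disjoint from E. -/
noncomputable def lambda0 (E : Set ℝ) (h : ℝ) : ℝ :=
  sSup {l : ℝ | ∃ a b : ℝ, 0 ≤ a ∧ a ≤ b ∧ b ≤ h ∧ Set.Ioo a b ∩ E = ∅ ∧ l = b - a}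

/-- p⁺(E,0): the right porosity of E at 0. -/
noncomputable def porosity (E : Set ℝ) : ℝ :=
  Filter.limsup (fun h => lambda0 E h / h) (nhdsWithin 0 (Set.Ioi 0))

/-- 0 is an accumulation point of E (E ⊆ [0,∞), relative topology of [0,∞)). -/
def AccZero (E : Set ℝ) : Prop := ∀ ε > 0, ∃ x ∈ E, 0 < x ∧ x < ε

/-- (a,b) is a connected component of the exterior of E in [0,∞):
an open interval in [0,∞) disjoint from E, maximal with this property. -/
def IsCompExt (E : Set ℝ) (a b : ℝ) : Prop :=
  0 ≤ a ∧ a < b ∧ Set.Ioo a b ∩ E = ∅ ∧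
  ∀ c d : ℝ, 0 ≤ c → Set.Ioo a b ⊆ Set.Ioo c d → (c, d) ≠ (a, b) → Set.Ioo c d ∩ E ≠ ∅

/-- Membership in Ĩ_E. -/
def memIE (E : Set ℝ) (A : ℕ → ℝ × ℝ) : Prop :=
  (∀ n, 0 < (A n).1) ∧ (∀ n, IsCompExt E (A n).1 (A n).2) ∧
  Filter.Tendsto (fun n => (A n).1) Filter.atTop (nhds 0) ∧
  Filter.Tendsto (fun n => ((A n).2 - (A n).1) / (A n).2) Filter.atTop (nhds 1)

/-- Almost decreasing sequence: eventually nonincreasing. -/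
def AlmostDecr (τ : ℕ → ℝ) : Prop := ∀ᶠ n in Filter.atTop, τ (n + 1) ≤ τ n

/-- Membership in Ẽ₀^d: almost decreasing sequences in E∖{0} tending to 0. -/
def memE0d (E : Set ℝ) (τ : ℕ → ℝ) : Prop :=
  AlmostDecr τ ∧ Filter.Tendsto τ Filter.atTop (nhds 0) ∧ ∀ n, τ n ∈ E \ {0}

/-- Weak equivalence ≍ of sequences: c₁ aₙ ≤ γₙ ≤ c₂ aₙ for large n. -/
def SeqEquiv (a γ : ℕ → ℝ) : Prop :=
  ∃ c₁ c₂ : ℝ, 0 < c₁ ∧ 0 < c₂ ∧ ∀ᶠ n in Filter.atTop, c₁ * a n ≤ γ n ∧ γ n ≤ c₂ * a n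

/-- E is τ̃-strongly porous. -/
def StronglyPorousWrt (E : Set ℝ) (τ : ℕ → ℝ) : Prop :=
  ∃ A : ℕ → ℝ × ℝ, memIE E A ∧ SeqEquiv (fun n => (A n).1) τ

/-- E is completely strongly porous at 0. -/
def CSP (E : Set ℝ) : Prop := ∀ τ : ℕ → ℝ, memE0d E τ → StronglyPorousWrt E τ

/-- Membership in Ĩ_E^d: first coordinates almost decreasing. -/
def memIEd (E : Set ℝ) (A : ℕ → ℝ × ℝ) : Prop := memIE E A ∧ AlmostDecr (fun n => (A n).1)

/-- Membership in Ĩ_E^{sd}: first coordinates eventually strictly decreasing. -/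
def memIEsd (E : Set ℝ) (A : ℕ → ℝ × ℝ) : Prop :=
  memIE E A ∧ ∀ᶠ n in Filter.atTop, (A (n + 1)).1 < (A n).1

/-- The preorder Ã ⪯ L̃. -/
def Prec (A L : ℕ → ℝ × ℝ) : Prop :=
  ∃ N₁ : ℕ, ∃ f : ℕ → ℕ, ∀ n ≥ N₁, (A n).1 = (L (f n)).1

/-- L̃ is universal: every Ã ∈ Ĩ_E^d satisfies Ã ⪯ L̃. -/
def Universal (E : Set ℝ) (L : ℕ → ℝ × ℝ) : Prop :=
  ∀ A : ℕ → ℝ × ℝ, memIEd E A → Prec A L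

/-- M(L̃) = limsup lₙ/mₙ₊₁ (in [0,∞]). -/
noncomputable def Mq (L : ℕ → ℝ × ℝ) : ℝ≥0∞ :=
  Filter.limsup (fun n => ENNReal.ofReal ((L n).1 / (L (n + 1)).2)) Filter.atTop

/-- C(τ̃) = inf over {(aₙ,bₙ)} ∈ Ĩ_E with τₙ ≤ aₙ eventually of limsup aₙ/τₙ. -/
noncomputable def Cseq (E : Set ℝ) (τ : ℕ → ℝ) : ℝ≥0∞ :=
  ⨅ (A : ℕ → ℝ × ℝ) (_ : memIE E A ∧ ∀ᶠ n in Filter.atTop, τ n ≤ (A n).1),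
    Filter.limsup (fun n => ENNReal.ofReal ((A n).1 / τ n)) Filter.atTop

/-- C_E = sup over τ̃ ∈ Ẽ₀^d of C(τ̃). -/
noncomputable def CE (E : Set ℝ) : ℝ≥0∞ := ⨆ (τ : ℕ → ℝ) (_ : memE0d E τ), Cseq E τ

/-- E is uniformly strongly porous at 0. -/
def USP (E : Set ℝ) : Prop :=
  ∃ c : ℝ, 0 < c ∧ ∀ τ : ℕ → ℝ, memE0d E τ → ∃ A : ℕ → ℝ × ℝ, memIE E A ∧
    (∀ᶠ n in Filter.atTop, τ n ≤ (A n).1) ∧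
    Filter.limsup (fun n => ENNReal.ofReal ((A n).1 / τ n)) Filter.atTop ≤ ENNReal.ofReal c

/-!
(iii) ⇒ (i) is immediate. For (ii) ⇒ (iii), given `τ` let `k` be the last index with
`τₙ ≤ l_k`; then `τₙ ∈ E` lies to the right of the gap `(l_{k+1}, m_{k+1})`, so
`l_k / τₙ ≤ l_k / m_{k+1}`, which is bounded because `M(L̃) < ∞`.

For (i) ⇒ (ii), complete strong porosity first yields a threshold `R ≥ 2` such that the
components `(a, b)` with `b ≥ R a` satisfy `b / a → ∞` as `a → 0`: otherwise points of `E` just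
left of components with bounded ratios `≥ R` form a sequence `τ` whose companion sequence from
(i), squeezed between `τₙ` and `τₙ / c`, must consist of those very components, whose ratios are
bounded. The left endpoints in `(0, 1)` of components with `b ≥ R a` are `2`-separated and, by
porosity, accumulate at `0`; listing them decreasingly with their right endpoints gives `L̃`,
which is universal since every sequence in `Ĩ_E` eventually consists of such components. If
`lₙ / mₙ₊₁` were unbounded, points of `E` just right of the `mₙ₊₁` would form a `τ` whose
companion sequence, made of terms of `L̃` above `mₙ₊₁`, is at least `lₙ`, contradicting
`aₖ ≤ τₖ / c`.
-/
lemma tendsto_nhds_zero_of_le_half {u : ℕ → ℝ} (h0 : ∀ n, 0 ≤ u n)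
    (h : ∀ n, u (n + 1) ≤ u n / 2) : Tendsto u atTop (𝓝 0) := by
  have hgeom : ∀ n, u n ≤ (1 / 2 : ℝ) ^ n * u 0 :=
    fun n => le_geom (by norm_num) n fun k _ => by linarith [h k]
  refine squeeze_zero h0 hgeom ?_
  simpa using (tendsto_pow_atTop_nhds_zero_of_lt_one (r := (1 / 2 : ℝ)) (by norm_num)
    (by norm_num)).mul_const (u 0)

lemma tendsto_sub_div_self_nhds_one_iff {ι : Type*} {l : Filter ι} {a b : ι → ℝ}
    (ha : ∀ i, 0 ≤ a i) (hb : ∀ i, 0 < b i) :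
    Tendsto (fun i => (b i - a i) / b i) l (𝓝 1) ↔ ∀ K : ℝ, ∀ᶠ i in l, K * a i ≤ b i := by
  have heq : (fun i => (b i - a i) / b i) = fun i => 1 - a i / b i :=
    funext fun i => by rw [sub_div, div_self (hb i).ne']
  have hsub := tendsto_const_sub_iff (1 : ℝ) (c := 0) (f := fun i => a i / b i) (l := l)
  rw [sub_zero] at hsub
  rw [heq, hsub]
  constructor
  · intro h K
    have hK : 0 < max K 1 := lt_max_of_lt_right one_pos
    filter_upwards [h.eventually (gt_mem_nhds (inv_pos.2 hK))] with i hi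
    rw [div_lt_iff₀ (hb i), inv_mul_eq_div, lt_div_iff₀ hK] at hi
    nlinarith [le_max_left K 1, ha i]
  · intro h
    refine tendsto_order.2 ⟨fun c hc => .of_forall fun i => hc.trans_le
      (div_nonneg (ha i) (hb i).le), fun c hc => ?_⟩
    filter_upwards [h (2 / c)] with i hi
    rw [div_mul_eq_mul_div, div_le_iff₀ hc] at hi
    rw [div_lt_iff₀ (hb i)]
    nlinarith [ha i, hb i]

lemma limsup_ofReal_lt_top_iff {ι : Type*} {l : Filter ι} {u : ι → ℝ} :
    limsup (fun i => ENNReal.ofReal (u i)) l < ⊤ ↔ ∃ K : ℝ, ∀ᶠ i in l, u i ≤ K := by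
  constructor
  · intro h
    set M := limsup (fun i => ENNReal.ofReal (u i)) l
    have hM : M + 1 ≠ ⊤ := ENNReal.add_ne_top.2 ⟨h.ne, ENNReal.one_ne_top⟩
    refine ⟨(M + 1).toReal, ?_⟩
    filter_upwards [eventually_lt_of_limsup_lt (ENNReal.lt_add_right h.ne one_ne_zero)]
      with i hi
    rw [← ENNReal.ofReal_toReal hM, ENNReal.ofReal_lt_ofReal_iff'] at hi
    exact hi.1.le
  · rintro ⟨K, hK⟩
    exact (limsup_le_of_le (by isBoundedDefault)
      (hK.mono fun i hi => ENNReal.ofReal_le_ofReal hi)).trans_lt ENNReal.ofReal_lt_top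

lemma csSup_mem_of_two_mul_le {S : Set ℝ} (hne : S.Nonempty) (hbdd : BddAbove S)
    (hpos : ∀ x ∈ S, 0 < x) (hsep : ∀ x ∈ S, ∀ y ∈ S, x < y → 2 * x ≤ y) : sSup S ∈ S := by
  obtain ⟨x₀, hx₀⟩ := hne
  have hsup : 0 < sSup S := (hpos x₀ hx₀).trans_le (le_csSup hbdd hx₀)
  obtain ⟨y, hy, hyS⟩ := exists_lt_of_lt_csSup ⟨x₀, hx₀⟩
    (show 2 / 3 * sSup S < sSup S by linarith)
  have hgreatest : IsGreatest S y := ⟨hy, fun z hz => not_lt.1 fun hyz => by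
    linarith [hsep y hy z hz hyz, le_csSup hbdd hz]⟩
  exact hgreatest.csSup_eq ▸ hy

lemma exists_strictAnti_range_eq {S : Set ℝ} (hbdd : BddAbove S) (hpos : ∀ x ∈ S, 0 < x)
    (hacc : ∀ ε > 0, ∃ x ∈ S, x < ε) (hsep : ∀ x ∈ S, ∀ y ∈ S, x < y → 2 * x ≤ y) :
    ∃ l : ℕ → ℝ, StrictAnti l ∧ range l = S ∧ Tendsto l atTop (𝓝 0) := by
  have hpred : ∀ x ∈ S, sSup (S ∩ Iio x) ∈ S ∩ Iio x := fun x hx =>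
    csSup_mem_of_two_mul_le (hacc x (hpos x hx)) (hbdd.mono inter_subset_left)
      (fun y hy => hpos y hy.1) (fun y hy z hz => hsep y hy.1 z hz.1)
  set l : ℕ → ℝ := fun n => (fun x => sSup (S ∩ Iio x))^[n] (sSup S)
  have hsucc : ∀ n, l (n + 1) = sSup (S ∩ Iio (l n)) :=
    fun n => Function.iterate_succ_apply' _ _ _
  have hmem : ∀ n, l n ∈ S := by
    intro n
    induction n with
    | zero =>
      obtain ⟨x, hx, -⟩ := hacc 1 one_pos
      exact csSup_mem_of_two_mul_le ⟨x, hx⟩ hbdd hpos hsep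
    | succ n ih => exact hsucc n ▸ (hpred _ ih).1
  have hlt : ∀ n, l (n + 1) < l n := fun n => hsucc n ▸ (hpred _ (hmem n)).2
  have hnext : ∀ n, ∀ x ∈ S, x < l n → x ≤ l (n + 1) := fun n x hx hxl =>
    hsucc n ▸ le_csSup (hbdd.mono inter_subset_left) ⟨hx, hxl⟩
  have hlim : Tendsto l atTop (𝓝 0) := tendsto_nhds_zero_of_le_half
    (fun n => (hpos _ (hmem n)).le)
    (fun n => by linarith [hsep _ (hmem (n + 1)) _ (hmem n) (hlt n)])
  refine ⟨l, strictAnti_nat_of_succ_lt hlt,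
    (range_subset_iff.2 hmem).antisymm fun x hx => ?_, hlim⟩
  by_contra hx'
  have hbelow : ∀ n, x < l n := by
    intro n
    induction n with
    | zero => exact (le_csSup hbdd hx).lt_of_ne fun h => hx' ⟨0, h.symm⟩
    | succ n ih => exact (hnext n x hx ih).lt_of_ne fun h => hx' ⟨n + 1, h.symm⟩
  obtain ⟨n, hn⟩ := (hlim.eventually (gt_mem_nhds (hpos x hx))).exists
  exact (hbelow n).not_gt hn

namespace IsCompExt

variable {E : Set ℝ} {a b : ℝ}

lemma le_left_of_mem (h : IsCompExt E a b) {x : ℝ} (hx : x ∈ E) (hxb : x < b) : x ≤ a :=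
  not_lt.1 fun hax => (eq_empty_iff_forall_notMem.1 h.2.2.1) x ⟨⟨hax, hxb⟩, hx⟩

lemma right_le_of_mem (h : IsCompExt E a b) {x : ℝ} (hx : x ∈ E) (hax : a < x) : b ≤ x :=
  not_lt.1 fun hxb => (eq_empty_iff_forall_notMem.1 h.2.2.1) x ⟨⟨hax, hxb⟩, hx⟩

lemma exists_mem_Ioc (h : IsCompExt E a b) {c : ℝ} (hc : 0 ≤ c) (hca : c < a) :
    ∃ x ∈ E, c < x ∧ x ≤ a := by
  obtain ⟨x, ⟨hcx, hxb⟩, hxE⟩ := nonempty_iff_ne_empty.2 <|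
    h.2.2.2 c b hc (Ioo_subset_Ioo hca.le le_rfl) fun he => hca.ne (Prod.mk.inj he).1
  exact ⟨x, hxE, hcx, h.le_left_of_mem hxE hxb⟩

lemma exists_mem_Ico (h : IsCompExt E a b) {d : ℝ} (hbd : b < d) :
    ∃ x ∈ E, b ≤ x ∧ x < d := by
  obtain ⟨x, ⟨hax, hxd⟩, hxE⟩ := nonempty_iff_ne_empty.2 <|
    h.2.2.2 a d h.1 (Ioo_subset_Ioo le_rfl hbd.le) fun he => hbd.ne' (Prod.mk.inj he).2
  exact ⟨x, hxE, h.right_le_of_mem hxE hax, hxd⟩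

lemma of_exists_mem (ha : 0 ≤ a) (hab : a < b) (hgap : Ioo a b ∩ E = ∅)
    (hleft : ∀ c, 0 ≤ c → c < a → ∃ x ∈ E, c < x ∧ x ≤ a)
    (hright : ∀ d, b < d → ∃ x ∈ E, b ≤ x ∧ x < d) : IsCompExt E a b := by
  refine ⟨ha, hab, hgap, fun c d hc hsub hne => nonempty_iff_ne_empty.1 ?_⟩
  obtain ⟨hca, hbd⟩ := (Ioo_subset_Ioo_iff hab).1 hsub
  rcases hca.lt_or_eq with hca | rfl
  · obtain ⟨x, hxE, hcx, hxa⟩ := hleft c hc hca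
    exact ⟨x, ⟨hcx, hxa.trans_lt (hab.trans_le hbd)⟩, hxE⟩
  · obtain ⟨x, hxE, hbx, hxd⟩ := hright d (hbd.lt_of_ne fun hdb => hne (by rw [hdb]))
    exact ⟨x, ⟨hab.trans_le hbx, hxd⟩, hxE⟩

lemma right_le_of_lt {a' b' : ℝ} (h : IsCompExt E a b) (h' : IsCompExt E a' b')
    (hlt : a < a') : b ≤ a' := by
  by_contra! hba
  rcases le_or_gt b' b with hb'b | hbb'
  · exact h'.2.2.2 a b h.1 (Ioo_subset_Ioo hlt.le hb'b)
      (fun he => hlt.ne (Prod.mk.inj he).1) h.2.2.1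
  · refine h.2.2.2 a b' h.1 (Ioo_subset_Ioo le_rfl hbb'.le)
      (fun he => hbb'.ne' (Prod.mk.inj he).2) (eq_empty_iff_forall_notMem.2 ?_)
    rintro x ⟨⟨hax, hxb'⟩, hxE⟩
    rcases lt_or_ge x b with hxb | hbx
    · exact (eq_empty_iff_forall_notMem.1 h.2.2.1) x ⟨⟨hax, hxb⟩, hxE⟩
    · exact (eq_empty_iff_forall_notMem.1 h'.2.2.1) x ⟨⟨hba.trans_le hbx, hxb'⟩, hxE⟩

lemma right_unique {b' : ℝ} (h : IsCompExt E a b) (h' : IsCompExt E a b') : b = b' := by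
  by_contra hne
  rcases lt_or_gt_of_ne hne with hlt | hlt
  · exact h.2.2.2 a b' h.1 (Ioo_subset_Ioo le_rfl hlt.le)
      (fun he => hlt.ne' (Prod.mk.inj he).2) h'.2.2.1
  · exact h'.2.2.2 a b h'.1 (Ioo_subset_Ioo le_rfl hlt.le)
      (fun he => hlt.ne' (Prod.mk.inj he).2) h.2.2.1

lemma eq_of_lt_two_mul {α β : ℝ} (hA : IsCompExt E α β) (h : IsCompExt E a b)
    (ha : a < 2 * α) (hb : α < b) (hβ : 2 * α ≤ β) : α = a ∧ β = b := by
  have hαa : α = a := by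
    rcases lt_trichotomy α a with hlt | heq | hgt
    · linarith [hA.right_le_of_lt h hlt]
    · exact heq
    · linarith [h.right_le_of_lt hA hgt]
  subst hαa
  exact ⟨rfl, hA.right_unique h⟩

end IsCompExt

lemma exists_isCompExt_of_gap {E : Set ℝ} (hacc : AccZero E) {g₁ g₂ t : ℝ} (hg₁ : 0 < g₁)
    (hg : g₁ < g₂) (hgap : Ioo g₁ g₂ ∩ E = ∅) (ht : t ∈ E) (hg₂t : g₂ ≤ t) :
    ∃ a b, IsCompExt E a b ∧ 0 < a ∧ a ≤ g₁ ∧ g₂ ≤ b := by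
  obtain ⟨x₀, hx₀E, hx₀, hx₀g⟩ := hacc g₁ hg₁
  set S₁ := E ∩ Ioc 0 g₁
  set S₂ := E ∩ Ici g₂
  have hS₁ : S₁.Nonempty := ⟨x₀, hx₀E, hx₀, hx₀g.le⟩
  have hS₂ : S₂.Nonempty := ⟨t, ht, hg₂t⟩
  have hbdd₁ : BddAbove S₁ := ⟨g₁, fun y hy => hy.2.2⟩
  have hbdd₂ : BddBelow S₂ := ⟨g₂, fun y hy => hy.2⟩
  have ha : 0 < sSup S₁ := hx₀.trans_le (le_csSup hbdd₁ ⟨hx₀E, hx₀, hx₀g.le⟩)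
  have hag : sSup S₁ ≤ g₁ := csSup_le hS₁ fun y hy => hy.2.2
  have hgb : g₂ ≤ sInf S₂ := le_csInf hS₂ fun y hy => hy.2
  refine ⟨sSup S₁, sInf S₂, IsCompExt.of_exists_mem ha.le (by linarith) ?_ ?_ ?_,
    ha, hag, hgb⟩
  · refine eq_empty_iff_forall_notMem.2 ?_
    rintro x ⟨⟨hax, hxb⟩, hxE⟩
    rcases le_or_gt x g₁ with hxg | hxg
    · exact hax.not_ge (le_csSup hbdd₁ ⟨hxE, ha.trans hax, hxg⟩)
    · rcases lt_or_ge x g₂ with hxg' | hxg'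
      · exact (eq_empty_iff_forall_notMem.1 hgap) x ⟨⟨hxg, hxg'⟩, hxE⟩
      · exact hxb.not_ge (csInf_le hbdd₂ ⟨hxE, hxg'⟩)
  · intro c _ hc
    obtain ⟨y, hy, hcy⟩ := exists_lt_of_lt_csSup hS₁ hc
    exact ⟨y, hy.1, hcy, le_csSup hbdd₁ hy⟩
  · intro d hd
    obtain ⟨y, hy, hyd⟩ := exists_lt_of_csInf_lt hS₂ hd
    exact ⟨y, hy.1, csInf_le hbdd₂ hy, hyd⟩

section Porosity

variable {E : Set ℝ}

lemma lambda0_nonneg {h : ℝ} (hh : 0 ≤ h) : 0 ≤ lambda0 E h :=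
  le_csSup ⟨h, by rintro l ⟨a, b, ha, -, hb, -, rfl⟩; linarith⟩
    ⟨0, 0, le_rfl, le_rfl, hh, by simp, by ring⟩

lemma exists_mul_lt_lambda0 (hpor : porosity E = 1) {q : ℝ} (hq : q < 1) {ε : ℝ}
    (hε : 0 < ε) : ∃ h, 0 < h ∧ h < ε ∧ q * h < lambda0 E h := by
  have hcobdd : IsCoboundedUnder (· ≤ ·) (𝓝[>] (0 : ℝ)) fun h => lambda0 E h / h :=
    isCoboundedUnder_le_of_eventually_le _ (x := 0) <| eventually_nhdsWithin_of_forall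
      fun h (hh : 0 < h) => div_nonneg (lambda0_nonneg hh.le) hh.le
  have hfreq := frequently_lt_of_lt_limsup hcobdd (hpor ▸ hq : q < porosity E)
  obtain ⟨h, hqh, hh, hhε⟩ :=
    (hfreq.and_eventually (Ioo_mem_nhdsGT hε)).exists
  exact ⟨h, hh, hhε, (lt_div_iff₀ hh).1 hqh⟩

lemma exists_gap_mul_lt (hpor : porosity E = 1) {R : ℝ} (hR : 1 ≤ R) {ε : ℝ} (hε : 0 < ε) :
    ∃ g₁ g₂, 0 ≤ g₁ ∧ g₂ < ε ∧ Ioo g₁ g₂ ∩ E = ∅ ∧ R * g₁ < g₂ := by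
  have hR₀ : 0 < R := one_pos.trans_le hR
  obtain ⟨h, hh, hhε, hlam⟩ := exists_mul_lt_lambda0 hpor (sub_lt_self 1 (inv_pos.2 hR₀)) hε
  obtain ⟨l, ⟨g₁, g₂, hg₁, -, hg₂, hgap, rfl⟩, hl⟩ :=
    exists_lt_of_lt_csSup (by exact ⟨0, 0, 0, le_rfl, le_rfl, hh.le, by simp, by ring⟩) hlam
  refine ⟨g₁, g₂, hg₁, hg₂.trans_lt hhε, hgap, ?_⟩
  have hq : 0 ≤ 1 - R⁻¹ := sub_nonneg.2 (inv_le_one_of_one_le₀ hR)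
  have : g₁ < R⁻¹ * g₂ := by nlinarith [mul_le_mul_of_nonneg_left hg₂ hq]
  calc R * g₁ < R * (R⁻¹ * g₂) := mul_lt_mul_of_pos_left this hR₀
    _ = g₂ := by field_simp

lemma exists_isCompExt_mul_le (hpor : porosity E = 1) (hacc : AccZero E) {R : ℝ}
    (hR : 1 ≤ R) {ε : ℝ} (hε : 0 < ε) :
    ∃ a b, IsCompExt E a b ∧ 0 < a ∧ a < ε ∧ R * a ≤ b := by
  obtain ⟨t, htE, ht, htε⟩ := hacc ε hε
  obtain ⟨g₁, g₂, hg₁, hg₂, hgap, hRg⟩ := exists_gap_mul_lt hpor hR ht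
  have hg : g₁ < g₂ := (le_mul_of_one_le_left hg₁ hR).trans_lt hRg
  have hg₁pos : 0 < g₁ := by
    refine hg₁.lt_of_ne fun h₀ => ?_
    obtain ⟨x, hxE, hx, hxg⟩ := hacc g₂ (hg₁.trans_lt hg)
    exact (eq_empty_iff_forall_notMem.1 hgap) x ⟨⟨h₀ ▸ hx, hxg⟩, hxE⟩
  obtain ⟨a, b, hab, ha, hag, hgb⟩ :=
    exists_isCompExt_of_gap hacc hg₁pos hg hgap htE hg₂.le
  have hRa : R * a ≤ R * g₁ := mul_le_mul_of_nonneg_left hag (zero_le_one.trans hR)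
  exact ⟨a, b, hab, ha, by linarith, by linarith⟩

end Porosity

section Sequences

variable {E : Set ℝ}

lemma memIE.snd_pos {A : ℕ → ℝ × ℝ} (hA : memIE E A) (n : ℕ) : 0 < (A n).2 :=
  (hA.1 n).trans (hA.2.1 n).2.1

lemma memIE.eventually_mul_le {A : ℕ → ℝ × ℝ} (hA : memIE E A) (K : ℝ) :
    ∀ᶠ n in atTop, K * (A n).1 ≤ (A n).2 :=
  (tendsto_sub_div_self_nhds_one_iff (fun n => (hA.1 n).le) hA.snd_pos).1 hA.2.2.2 K

lemma memIE_of_eventually_mul_le {a b : ℕ → ℝ} (ha : ∀ n, 0 < a n)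
    (hab : ∀ n, IsCompExt E (a n) (b n)) (hlim : Tendsto a atTop (𝓝 0))
    (hK : ∀ K : ℝ, ∀ᶠ n in atTop, K * a n ≤ b n) : memIE E fun n => (a n, b n) :=
  ⟨ha, hab, hlim, (tendsto_sub_div_self_nhds_one_iff (fun n => (ha n).le)
    fun n => (ha n).trans (hab n).2.1).2 hK⟩

lemma memIE.comp_tendsto {A : ℕ → ℝ × ℝ} (hA : memIE E A) {k : ℕ → ℕ}
    (hk : Tendsto k atTop atTop) : memIE E fun n => A (k n) :=
  ⟨fun n => hA.1 (k n), fun n => hA.2.1 (k n), hA.2.2.1.comp hk, hA.2.2.2.comp hk⟩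

lemma memE0d.pos (hE : E ⊆ Ici 0) {τ : ℕ → ℝ} (hτ : memE0d E τ) (n : ℕ) : 0 < τ n :=
  (hE (hτ.2.2 n).1).lt_of_ne' (hτ.2.2 n).2

lemma exists_memE0d_forall {P : ℕ → ℝ → Prop}
    (hP : ∀ k, ∀ ε > 0, ∃ x ∈ E, 0 < x ∧ x < ε ∧ P k x) :
    ∃ τ, memE0d E τ ∧ ∀ k, P k (τ k) := by
  have hP' : ∀ k (ε : ℝ), ∃ x, 0 < ε → x ∈ E ∧ 0 < x ∧ x < ε ∧ P k x := fun k ε =>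
    if hε : 0 < ε then (hP k ε hε).imp fun _ hx _ => hx else ⟨0, fun h => absurd h hε⟩
  choose f hf using hP'
  let τ : ℕ → ℝ := fun k => Nat.rec (f 0 1) (fun k t => f (k + 1) (t / 2)) k
  have hpos : ∀ k, 0 < τ k := by
    intro k
    induction k with
    | zero => exact (hf 0 1 one_pos).2.1
    | succ k ih => exact (hf (k + 1) _ (half_pos ih)).2.1
  have hspec : ∀ k, τ k ∈ E ∧ P k (τ k) := by
    rintro (_ | k)
    · exact ⟨(hf 0 1 one_pos).1, (hf 0 1 one_pos).2.2.2⟩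
    · exact ⟨(hf (k + 1) _ (half_pos (hpos k))).1, (hf (k + 1) _ (half_pos (hpos k))).2.2.2⟩
  have hhalf : ∀ k, τ (k + 1) < τ k / 2 := fun k => (hf (k + 1) _ (half_pos (hpos k))).2.2.1
  refine ⟨τ, ⟨.of_forall fun k => by linarith [hhalf k, hpos k],
    tendsto_nhds_zero_of_le_half (fun k => (hpos k).le) fun k => (hhalf k).le,
    fun k => ⟨(hspec k).1, (hpos k).ne'⟩⟩, fun k => (hspec k).2⟩

lemma prec_of_eventually_mem_range {A L : ℕ → ℝ × ℝ}
    (h : ∀ᶠ n in atTop, (A n).1 ∈ range fun k => (L k).1) : Prec A L := by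
  obtain ⟨N, hN⟩ := eventually_atTop.1 h
  have hidx : ∀ n, ∃ k, N ≤ n → (L k).1 = (A n).1 := fun n =>
    if hn : N ≤ n then (hN n hn).imp fun _ hk _ => hk else ⟨0, fun h => absurd h hn⟩
  choose f hf using hidx
  exact ⟨N, f, fun n hn => (hf n hn).symm⟩

end Sequences

def wideGapLefts (E : Set ℝ) (R : ℝ) : Set ℝ :=
  {a | 0 < a ∧ a < 1 ∧ ∃ b, IsCompExt E a b ∧ R * a ≤ b}

section WideGaps

variable {E : Set ℝ}

lemma memIE.eventually_mem_wideGapLefts {A : ℕ → ℝ × ℝ} (hA : memIE E A) (R : ℝ) :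
    ∀ᶠ n in atTop, (A n).1 ∈ wideGapLefts E R := by
  filter_upwards [hA.eventually_mul_le R, hA.2.2.1.eventually (gt_mem_nhds one_pos)]
    with n hR h1
  exact ⟨hA.1 n, h1, (A n).2, hA.2.1 n, hR⟩

lemma two_mul_le_of_mem_wideGapLefts {R : ℝ} (hR : 2 ≤ R) {x y : ℝ}
    (hx : x ∈ wideGapLefts E R) (hy : y ∈ wideGapLefts E R) (hxy : x < y) : 2 * x ≤ y := by
  obtain ⟨hx₀, -, b, hxb, hRx⟩ := hx
  obtain ⟨-, -, b', hyb', -⟩ := hy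
  nlinarith [hxb.right_le_of_lt hyb' hxy]

lemma exists_mem_wideGapLefts_lt (hpor : porosity E = 1) (hacc : AccZero E) {R : ℝ}
    (hR : 1 ≤ R) {ε : ℝ} (hε : 0 < ε) : ∃ x ∈ wideGapLefts E R, x < ε := by
  obtain ⟨a, b, hab, ha, haε, hRa⟩ :=
    exists_isCompExt_mul_le hpor hacc hR (lt_min hε one_pos)
  exact ⟨a, ⟨ha, haε.trans_le (min_le_right _ _), b, hab, hRa⟩, haε.trans_le (min_le_left _ _)⟩

end WideGaps

namespace CSP

variable {E : Set ℝ}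

lemma exists_sandwich (hcsp : CSP E) {τ : ℕ → ℝ} (hτ : memE0d E τ) :
    ∃ (A : ℕ → ℝ × ℝ) (c : ℝ), memIE E A ∧ 0 < c ∧
      ∀ᶠ n in atTop, τ n ≤ (A n).1 ∧ c * (A n).1 ≤ τ n := by
  obtain ⟨A, hA, c₁, c₂, hc₁, -, hev⟩ := hcsp τ hτ
  refine ⟨A, c₁, hA, hc₁, ?_⟩
  filter_upwards [hev, hA.eventually_mul_le (c₂ + 1)] with n ⟨hlow, hup⟩ hb
  have hτb : τ n < (A n).2 := by nlinarith [hA.1 n]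
  exact ⟨(hA.2.1 n).le_left_of_mem (hτ.2.2 n).1 hτb, hlow⟩

lemma exists_ratio_escape (hcsp : CSP E) :
    ∃ R, 2 ≤ R ∧ ∀ K, ∃ δ > 0, ∀ a b, IsCompExt E a b → a < δ → R * a ≤ b → K * a ≤ b := by
  by_contra! h
  -- Indexing by `s.unpair.1` makes every ratio bound `j + 2` recur infinitely often along `τ`.
  choose K hK using fun j : ℕ => h (j + 2) (by linarith [j.cast_nonneg (α := ℝ)])
  have hP : ∀ s : ℕ, ∀ ε > 0, ∃ x ∈ E, 0 < x ∧ x < ε ∧ ∃ a b, IsCompExt E a b ∧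
      a < 2 * x ∧ x ≤ a ∧ ((s.unpair.1 : ℝ) + 2) * a ≤ b ∧ b < K s.unpair.1 * a := by
    intro s ε hε
    obtain ⟨a, b, hab, haε, hRa, hbK⟩ := hK s.unpair.1 ε hε
    have ha : 0 < a := hab.1.lt_of_ne fun h₀ => by
      subst h₀; linarith [hab.2.1]
    obtain ⟨x, hxE, hx, hxa⟩ := hab.exists_mem_Ioc (half_pos ha).le (half_lt_self ha)
    exact ⟨x, hxE, by linarith, by linarith, a, b, hab, by linarith, hxa, hRa, hbK⟩
  obtain ⟨τ, hτ, hτP⟩ := exists_memE0d_forall hP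
  choose a b hab ha2 hτa hRab hbK using hτP
  obtain ⟨A, c, hA, hc, hsand⟩ := hcsp.exists_sandwich hτ
  set j := ⌈c⁻¹⌉₊
  obtain ⟨N, hN⟩ := eventually_atTop.1 <|
    hsand.and ((hA.eventually_mul_le (K j)).and (hA.eventually_mul_le 2))
  set s := Nat.pair j N
  obtain ⟨⟨hτA, hcA⟩, hKA, h2A⟩ := hN s (Nat.right_le_pair j N)
  have hjs : s.unpair.1 = j := by simp [s]
  have hR := hRab s
  have hb := hbK s
  rw [hjs] at hR hb
  have has : 0 < a s := by linarith [ha2 s, hτa s]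
  have hAj : (A s).1 ≤ j * a s := by
    calc (A s).1 = c⁻¹ * (c * (A s).1) := by field_simp
      _ ≤ c⁻¹ * a s := by gcongr; linarith [hτa s]
      _ ≤ j * a s := by gcongr; exact Nat.le_ceil _
  obtain ⟨hα, hβ⟩ := (hA.2.1 s).eq_of_lt_two_mul (hab s) (by linarith [ha2 s])
    (by nlinarith) h2A
  rw [hα, hβ] at hKA
  linarith

lemma Mq_lt_top (hcsp : CSP E) {L : ℕ → ℝ × ℝ} (hL : memIE E L)
    (hanti : StrictAnti fun n => (L n).1)
    (huniv : ∀ A, memIE E A → ∀ᶠ n in atTop, (A n).1 ∈ range fun k => (L k).1) :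
    Mq L < ⊤ := by
  by_contra hM
  have hfreq : ∀ K : ℝ, ∃ᶠ n in atTop, K < (L n).1 / (L (n + 1)).2 := fun K => by
    by_contra h
    exact hM (limsup_ofReal_lt_top_iff.2 ⟨K, (not_frequently.1 h).mono fun _ => le_of_not_gt⟩)
  have hP : ∀ k : ℕ, ∀ ε > 0, ∃ x ∈ E, 0 < x ∧ x < ε ∧ ∃ n, (k : ℝ) < (L n).1 / (L (n + 1)).2 ∧
      (L (n + 1)).2 ≤ x ∧ x < 2 * (L (n + 1)).2 := by
    intro k ε hε
    obtain ⟨n, hn, hnε⟩ :=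
      ((hfreq k).and_eventually (hL.2.2.1.eventually (gt_mem_nhds (half_pos hε)))).exists
    have hm := hL.snd_pos (n + 1)
    obtain ⟨x, hxE, hmx, hx⟩ := (hL.2.1 (n + 1)).exists_mem_Ico (lt_two_mul_self hm)
    have hml : (L (n + 1)).2 ≤ (L n).1 :=
      (hL.2.1 (n + 1)).right_le_of_lt (hL.2.1 n) (hanti (lt_add_one n))
    exact ⟨x, hxE, by linarith, by linarith, n, hn, hmx, hx⟩
  obtain ⟨τ, hτ, hτP⟩ := exists_memE0d_forall hP
  obtain ⟨A, c, hA, hc, hsand⟩ := hcsp.exists_sandwich hτ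
  obtain ⟨k, ⟨hτA, hcA⟩, ⟨j, hj⟩, hk⟩ :=
    (hsand.and ((huniv A hA).and (eventually_ge_atTop ⌈2 / c⌉₊))).exists
  obtain ⟨n, hratio, hmτ, hτm⟩ := hτP k
  have hm := hL.snd_pos (n + 1)
  have hjn : j ≤ n := not_lt.1 fun hnj => by
    linarith [hanti.antitone (Nat.succ_le_of_lt hnj), (hL.2.1 (n + 1)).2.1]
  have hln : (L n).1 ≤ (A k).1 := hj ▸ hanti.antitone hjn
  have hck : 2 ≤ c * k := by
    rw [← div_le_iff₀' hc]; exact (Nat.le_ceil _).trans (by exact_mod_cast hk)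
  rw [lt_div_iff₀ hm] at hratio
  nlinarith

lemma exists_universal (hpor : porosity E = 1) (hacc : AccZero E) (hcsp : CSP E) :
    ∃ L : ℕ → ℝ × ℝ, memIEsd E L ∧ Universal E L ∧ Mq L < ⊤ := by
  obtain ⟨R, hR, hesc⟩ := hcsp.exists_ratio_escape
  obtain ⟨l, hanti, hrange, hlim⟩ := exists_strictAnti_range_eq (S := wideGapLefts E R)
    ⟨1, fun x hx => hx.2.1.le⟩ (fun x hx => hx.1)
    (fun ε => exists_mem_wideGapLefts_lt hpor hacc (by linarith))
    (fun x hx y hy => two_mul_le_of_mem_wideGapLefts hR hx hy)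
  have hlW : ∀ n, l n ∈ wideGapLefts E R := fun n => hrange ▸ mem_range_self n
  choose m hm hRm using fun n => (hlW n).2.2
  have hL : memIE E fun n => (l n, m n) :=
    memIE_of_eventually_mul_le (fun n => (hlW n).1) hm hlim fun K => by
      obtain ⟨δ, hδ, hK⟩ := hesc K
      filter_upwards [hlim.eventually (gt_mem_nhds hδ)] with n hn using hK _ _ (hm n) hn (hRm n)
  have huniv : ∀ A, memIE E A → ∀ᶠ n in atTop, (A n).1 ∈ range l := fun A hA => by
    simpa only [hrange] using hA.eventually_mem_wideGapLefts R
  exact ⟨_, ⟨hL, .of_forall fun n => hanti (lt_add_one n)⟩,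
    fun A hA => prec_of_eventually_mem_range (huniv A hA.1), hcsp.Mq_lt_top hL hanti huniv⟩

end CSP

lemma USP.of_exists_universal {E : Set ℝ} (hE : E ⊆ Ici 0)
    (h : ∃ L : ℕ → ℝ × ℝ, memIEsd E L ∧ Universal E L ∧ Mq L < ⊤) : USP E := by
  obtain ⟨L, ⟨hL, -⟩, -, hM⟩ := h
  obtain ⟨K, hK⟩ := limsup_ofReal_lt_top_iff.1 hM
  obtain ⟨N, hN⟩ := eventually_atTop.1 hK
  refine ⟨max K 1, lt_max_of_lt_right one_pos, fun τ hτ => ?_⟩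
  have hτpos := hτ.pos hE
  let k : ℕ → ℕ := fun n => sSup {j | τ n ≤ (L j).1}
  have hbdd : ∀ n, BddAbove {j | τ n ≤ (L j).1} := fun n => by
    obtain ⟨B, hB⟩ := eventually_atTop.1 (hL.2.2.1.eventually (gt_mem_nhds (hτpos n)))
    exact ⟨B, fun j hj => not_lt.1 fun hBj => (hB j hBj.le).not_ge hj⟩
  have hk_tend : Tendsto k atTop atTop := tendsto_atTop.2 fun M =>
    (hτ.2.1.eventually (gt_mem_nhds (hL.1 M))).mono fun n hn => le_csSup (hbdd n) hn.le
  have hk_next : ∀ n, (L (k n + 1)).2 ≤ τ n := fun n =>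
    (hL.2.1 _).right_le_of_mem (hτ.2.2 n).1 <| not_le.1 fun hle =>
      (lt_add_one (k n)).not_ge (le_csSup (hbdd n) hle)
  refine ⟨fun n => L (k n), hL.comp_tendsto hk_tend,
    (hτ.2.1.eventually (gt_mem_nhds (hL.1 0))).mono fun n hn => Nat.sSup_mem ⟨0, hn.le⟩ (hbdd n),
    limsup_le_of_le (by isBoundedDefault) ?_⟩
  filter_upwards [hk_tend.eventually (eventually_ge_atTop N)] with n hn
  refine ENNReal.ofReal_le_ofReal ?_
  calc (L (k n)).1 / τ n ≤ (L (k n)).1 / (L (k n + 1)).2 :=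
        div_le_div_of_nonneg_left (hL.1 _).le (hL.snd_pos _) (hk_next n)
    _ ≤ K := hN _ hn
    _ ≤ max K 1 := le_max_left K 1

lemma CSP.of_USP {E : Set ℝ} (hE : E ⊆ Ici 0) (h : USP E) : CSP E := by
  obtain ⟨c, -, hc⟩ := h
  intro τ hτ
  obtain ⟨A, hA, hτA, hlim⟩ := hc τ hτ
  obtain ⟨K, hK⟩ := limsup_ofReal_lt_top_iff.1 (hlim.trans_lt ENNReal.ofReal_lt_top)
  have hK₀ : 0 < max K 1 := lt_max_of_lt_right one_pos
  refine ⟨A, hA, (max K 1)⁻¹, 1, inv_pos.2 hK₀, one_pos, ?_⟩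
  filter_upwards [hK, hτA] with n hAK hτAn
  have hτn := hτ.pos hE n
  refine ⟨?_, by simpa using hτAn⟩
  rw [div_le_iff₀ hτn] at hAK
  rw [inv_mul_le_iff₀ hK₀]
  nlinarith [le_max_left K 1]

theorem stmt11 (E : Set ℝ) (hE : E ⊆ Set.Ici 0) (hpor : porosity E = 1)
    (hacc : AccZero E) :
    (CSP E ↔ ∃ L : ℕ → ℝ × ℝ, memIEsd E L ∧ Universal E L ∧ Mq L < ⊤) ∧
    (CSP E ↔ USP E) :=
  ⟨⟨CSP.exists_universal hpor hacc, fun h => CSP.of_USP hE (USP.of_exists_universal hE h)⟩,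
    ⟨fun h => USP.of_exists_universal hE (CSP.exists_universal hpor hacc h), CSP.of_USP hE⟩⟩
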